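/- In the chapter-4 setup, assume additionally that the y_i are conditionally independent, i.e. p_i(y_i | x_{i−1}, z_i, θ) = p_i(y_i | z_i, θ) does not depend on x_{i−1} for every i. Fix i and let β_i be a bounded measurable function of (z₁,…,z_n, y₁,…,y_{i−1}, y_{i+1},…,y_n) (i.e. of the whole sample path except y_i), with E[|β_i| · ‖s_i(θ)‖] < ∞. Then E[ β_i · s_i(θ) ] = 0. -/

import Mathlib

open MeasureTheory
open scoped BigOperators

noncomputable section

/-- The sample space of the chapter-4 setup: a tuple `ω = (z, y)` with
`z = (z₁,…,z_n)`, `z_{i+1} ∈ ℝ^{bb i}`, and `y = (y₁,…,y_n)`, `y_{i+1} ∈ ℝ^{aa i}`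
(index `i : Fin n` stands for the paper's index `i+1`). -/
abbrev SamplePath (aa bb : ℕ → ℕ) (n : ℕ) :=
  ((i : Fin n) → (Fin (bb i.1) → ℝ)) × ((i : Fin n) → (Fin (aa i.1) → ℝ))

/-- The recursively defined states: `x₀` is fixed and
`x_{i+1} = h_{i+1}(x_i, y_{i+1}, z_{i+1})`, where `h i` is the paper's `h_{i+1}`
(junk value `0` beyond index `n`). -/
def states (kk aa bb : ℕ → ℕ) (n : ℕ) (x₀ : Fin (kk 0) → ℝ)
    (h : (i : ℕ) → (Fin (kk i) → ℝ) → (Fin (aa i) → ℝ) → (Fin (bb i) → ℝ) →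
      (Fin (kk (i + 1)) → ℝ))
    (ω : SamplePath aa bb n) : (i : ℕ) → Fin (kk i) → ℝ
  | 0 => x₀
  | (i + 1) =>
    if hi : i < n then
      h i (states kk aa bb n x₀ h ω i) (ω.2 ⟨i, hi⟩) (ω.1 ⟨i, hi⟩)
    else 0

/-!
Under conditional independence the density factors as `μ(z) · ∏ⱼ pⱼ(yⱼ | zⱼ, θ)` and the score
`sᵢ` depends only on `(zᵢ, yᵢ)`. Once `z` and every `yⱼ` with `j ≠ i` are fixed, the integrand
`ρ β sᵢ` is therefore a constant multiple of `pᵢ ∇_θ log pᵢ = ∇_θ pᵢ`, whose integral over `yᵢ` is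
the derivative of `θ ↦ ∫ pᵢ dyᵢ = 1`, i.e. zero. Fubini finishes the proof.
-/

theorem integral_prod_eq_zero_of_forall_integral_eq_zero {α β E : Type*} [MeasurableSpace α]
    [MeasurableSpace β] [NormedAddCommGroup E] [NormedSpace ℝ E] {μ : Measure α} {ν : Measure β}
    [SFinite μ] [SFinite ν] {f : α × β → E} (h : ∀ x, ∫ y, f (x, y) ∂ν = 0) :
    ∫ z, f z ∂μ.prod ν = 0 := by
  by_cases hf : Integrable f (μ.prod ν)
  · simp [integral_prod f hf, h]
  · exact integral_undef hf

theorem integral_pi_eq_zero_of_forall_integral_insertNth_eq_zero {n : ℕ}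
    {X : Fin (n + 1) → Type*} [∀ j, MeasurableSpace (X j)] {μ : ∀ j, Measure (X j)}
    [∀ j, SigmaFinite (μ j)] {E : Type*} [NormedAddCommGroup E] [NormedSpace ℝ E]
    (i : Fin (n + 1)) {F : (∀ j, X j) → E}
    (h : ∀ y, ∫ x, F (i.insertNth x y) ∂μ i = 0) :
    ∫ x, F x ∂Measure.pi μ = 0 := by
  rw [← (measurePreserving_piFinSuccAbove μ i).symm.integral_comp', ← integral_prod_swap]
  exact integral_prod_eq_zero_of_forall_integral_eq_zero h

theorem integral_fderiv_eq_zero_of_integral_eq_one {α E : Type*} [MeasurableSpace α]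
    {ν : Measure α} [NormedAddCommGroup E] [NormedSpace ℝ E] {p : α → E → ℝ}
    (hdiff : ∀ a, Differentiable ℝ (p a)) (hnorm : ∀ θ, ∫ a, p a θ ∂ν = 1) {θ : E} {ε : ℝ}
    (hε : 0 < ε) {g : α → ℝ} (hg : Integrable g ν)
    (hbd : ∀ a θ', dist θ' θ < ε → ‖fderiv ℝ (p a) θ'‖ ≤ g a) :
    ∫ a, fderiv ℝ (p a) θ ∂ν = 0 := by
  have hp_int : ∀ θ', Integrable (p · θ') ν := fun θ' => by
    by_contra h
    simpa [integral_undef h] using hnorm θ'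
  -- Differentiating under the integral needs `a ↦ fderiv ℝ (p a) θ` to be measurable, which is
  -- automatic once it is integrable; otherwise both sides vanish.
  by_cases hp'_int : Integrable (fun a => fderiv ℝ (p a) θ) ν
  swap; · exact integral_undef hp'_int
  have hderiv := hasFDerivAt_integral_of_dominated_of_fderiv_le (Metric.ball_mem_nhds θ hε)
    (.of_forall fun θ' => (hp_int θ').aestronglyMeasurable) (hp_int θ)
    hp'_int.aestronglyMeasurable (.of_forall fun a θ' => hbd a θ') hg
    (.of_forall fun a θ' _ => (hdiff a θ').hasFDerivAt)
  simp_rw [hnorm] at hderiv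
  exact hderiv.unique (hasFDerivAt_const 1 θ)

theorem stmt_18_general
    (n m : ℕ) (kk aa bb : ℕ → ℕ)
    (x₀ : Fin (kk 0) → ℝ)
    (h : (i : ℕ) → (Fin (kk i) → ℝ) → (Fin (aa i) → ℝ) → (Fin (bb i) → ℝ) →
      (Fin (kk (i + 1)) → ℝ))
    (μ : ((i : Fin n) → (Fin (bb i.1) → ℝ)) → ℝ)
    (p : (i : ℕ) → (Fin (aa i) → ℝ) → (Fin (kk i) → ℝ) → (Fin (bb i) → ℝ) →
      (Fin m → ℝ) → ℝ)
    (hp_pos : ∀ i y xx z θ', 0 < p i y xx z θ')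
    (hp_diff : ∀ i y xx z, Differentiable ℝ (p i y xx z))
    (hp_norm : ∀ i xx z θ', ∫ y, p i y xx z θ' = 1)
    (θ : Fin m → ℝ) (ε : ℝ) (hε : 0 < ε)
    (g : (i : ℕ) → (Fin (kk i) → ℝ) → (Fin (bb i) → ℝ) → (Fin (aa i) → ℝ) → ℝ)
    (hg_int : ∀ i xx z, Integrable (g i xx z))
    (hg_bd : ∀ i y xx z, ∀ θ' : Fin m → ℝ, dist θ' θ < ε →
      ‖fderiv ℝ (p i y xx z) θ'‖ ≤ g i xx z y)
    (ρ : SamplePath aa bb n → ℝ)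
    (hρ : ∀ ω, ρ ω =
      μ ω.1 * ∏ i : Fin n, p i.1 (ω.2 i) (states kk aa bb n x₀ h ω i.1) (ω.1 i) θ)
    (S : Fin n → SamplePath aa bb n → ((Fin m → ℝ) →L[ℝ] ℝ))
    (hS : ∀ i ω, S i ω = fderiv ℝ
      (fun t => Real.log (p i.1 (ω.2 i) (states kk aa bb n x₀ h ω i.1) (ω.1 i) t)) θ)
    (hp_ci : ∀ i y xx xx' z θ', p i y xx z θ' = p i y xx' z θ')
    (i : Fin n)
    (β : SamplePath aa bb n → ℝ)
    (hβ_dep : ∀ (ω ω' : SamplePath aa bb n), ω.1 = ω'.1 →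
      (∀ t : Fin n, t ≠ i → ω.2 t = ω'.2 t) → β ω = β ω') :
    ∫ ω, ρ ω • (β ω • S i ω) = (0 : (Fin m → ℝ) →L[ℝ] ℝ) := by
  obtain ⟨k, rfl⟩ : ∃ k, n = k + 1 := Nat.exists_eq_succ_of_ne_zero i.pos.ne'
  have hρ₀ : ∀ ω, ρ ω = μ ω.1 * ∏ j : Fin (k + 1), p j.1 (ω.2 j) 0 (ω.1 j) θ := fun ω => by
    rw [hρ]
    exact congrArg _ (Finset.prod_congr rfl fun j _ => hp_ci _ _ _ _ _ _)
  have hS₀ : ∀ ω, S i ω = fderiv ℝ (fun t => Real.log (p i.1 (ω.2 i) 0 (ω.1 i) t)) θ :=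
    fun ω => by simp_rw [hS, hp_ci _ _ (states _ _ _ _ x₀ h ω i.1) 0]
  rw [Measure.volume_eq_prod]
  refine integral_prod_eq_zero_of_forall_integral_eq_zero fun z => ?_
  refine integral_pi_eq_zero_of_forall_integral_insertNth_eq_zero i fun y => ?_
  set c := μ z * (∏ j : Fin k, p (i.succAbove j).1 (y j) 0 (z (i.succAbove j)) θ) *
    β (z, i.insertNth 0 y)
  have hfiber : ∀ x, ρ (z, i.insertNth x y) •
      (β (z, i.insertNth x y) • S i (z, i.insertNth x y)) = c • fderiv ℝ (p i.1 x 0 (z i)) θ := by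
    intro x
    have hβx : β (z, i.insertNth x y) = β (z, i.insertNth 0 y) := by
      refine hβ_dep _ _ rfl fun t ht => ?_
      obtain ⟨j, rfl⟩ := Fin.exists_succAbove_eq ht
      simp only [Fin.insertNth_apply_succAbove]
    rw [hρ₀, hS₀, hβx, Fin.prod_univ_succAbove _ i]
    simp only [Fin.insertNth_apply_same, Fin.insertNth_apply_succAbove]
    rw [fderiv.log (hp_diff _ _ _ _ θ) (hp_pos _ _ _ _ _).ne', smul_smul, smul_smul]
    congr 1
    field_simp [(hp_pos i.1 x 0 (z i) θ).ne']
    ring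
  simp_rw [hfiber, integral_smul]
  rw [integral_fderiv_eq_zero_of_integral_eq_one (fun x => hp_diff i x 0 (z i))
    (hp_norm i 0 (z i)) hε (hg_int i 0 (z i)) fun x θ' => hg_bd i x 0 (z i) θ', smul_zero]

/-- **Proposition 4.2: under conditional independence, a baseline for the `i`-th score may
depend on everything in the sample path except `y_i`.**  In the chapter-4 setup (joint
density `ρ ω = μ(z)·∏ p_i(y_i | x_{i-1}, z_i, θ)`, scores
`S i ω = ∇_θ log p_i(y_i | x_{i-1}, z_i, θ)`), assume additionally that the `y_i` are
conditionally independent, i.e. `p_i(y_i | x_{i-1}, z_i, θ)` does not depend on `x_{i-1}`.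
If `β` is a bounded measurable function of `(z₁,…,z_n, y₁,…,y_{i-1}, y_{i+1},…,y_n)` with
`E[|β|·‖s_i(θ)‖] < ∞`, then `E[β·s_i(θ)] = 0`. -/
theorem stmt_18
    (n m : ℕ) (hn : 1 ≤ n) (kk aa bb : ℕ → ℕ)
    (x₀ : Fin (kk 0) → ℝ)
    (h : (i : ℕ) → (Fin (kk i) → ℝ) → (Fin (aa i) → ℝ) → (Fin (bb i) → ℝ) →
      (Fin (kk (i + 1)) → ℝ))
    (hh : ∀ i, Measurable (fun q : (Fin (kk i) → ℝ) × (Fin (aa i) → ℝ) × (Fin (bb i) → ℝ) =>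
      h i q.1 q.2.1 q.2.2))
    (μ : ((i : Fin n) → (Fin (bb i.1) → ℝ)) → ℝ)
    (hμ0 : ∀ z, 0 ≤ μ z) (hμ1 : ∫ z, μ z = 1)
    (p : (i : ℕ) → (Fin (aa i) → ℝ) → (Fin (kk i) → ℝ) → (Fin (bb i) → ℝ) →
      (Fin m → ℝ) → ℝ)
    (hp_pos : ∀ i y xx z θ', 0 < p i y xx z θ')
    (hp_diff : ∀ i y xx z, Differentiable ℝ (p i y xx z))
    (hp_meas : ∀ i θ', Measurable
      (fun q : (Fin (aa i) → ℝ) × (Fin (kk i) → ℝ) × (Fin (bb i) → ℝ) =>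
        p i q.1 q.2.1 q.2.2 θ'))
    (hp_norm : ∀ i xx z θ', ∫ y, p i y xx z θ' = 1)
    (θ : Fin m → ℝ) (ε : ℝ) (hε : 0 < ε)
    (g : (i : ℕ) → (Fin (kk i) → ℝ) → (Fin (bb i) → ℝ) → (Fin (aa i) → ℝ) → ℝ)
    (hg_int : ∀ i xx z, Integrable (g i xx z))
    (hg_bd : ∀ i y xx z, ∀ θ' : Fin m → ℝ, dist θ' θ < ε →
      ‖fderiv ℝ (p i y xx z) θ'‖ ≤ g i xx z y)
    (ρ : SamplePath aa bb n → ℝ)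
    (hρ : ∀ ω, ρ ω =
      μ ω.1 * ∏ i : Fin n, p i.1 (ω.2 i) (states kk aa bb n x₀ h ω i.1) (ω.1 i) θ)
    (S : Fin n → SamplePath aa bb n → ((Fin m → ℝ) →L[ℝ] ℝ))
    (hS : ∀ i ω, S i ω = fderiv ℝ
      (fun t => Real.log (p i.1 (ω.2 i) (states kk aa bb n x₀ h ω i.1) (ω.1 i) t)) θ)
    (hp_ci : ∀ i y xx xx' z θ', p i y xx z θ' = p i y xx' z θ')
    (i : Fin n)
    (β : SamplePath aa bb n → ℝ)
    (hβ_meas : Measurable β)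
    (hβ_bd : ∃ C, ∀ ω, |β ω| ≤ C)
    (hβ_dep : ∀ (ω ω' : SamplePath aa bb n), ω.1 = ω'.1 →
      (∀ t : Fin n, t ≠ i → ω.2 t = ω'.2 t) → β ω = β ω')
    (hint : Integrable (fun ω => ρ ω * (|β ω| * ‖S i ω‖))) :
    ∫ ω, ρ ω • (β ω • S i ω) = (0 : (Fin m → ℝ) →L[ℝ] ℝ) :=
  stmt_18_general n m kk aa bb x₀ h μ p hp_pos hp_diff hp_norm θ ε hε g hg_int hg_bd ρ hρ S hS hp_ci
    i β hβ_dep
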